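/- arXiv:2405.01786 — 7 statements merged into one kernel-verified Lean document; each statement's English description precedes it below -/
import Mathlib

section
/- For natural numbers N, M with 1 ≤ N ≤ M, the fraction of collision-free outcomes among all N-photon M-mode outcomes satisfies C(M,N) > (1 − N²/M)·C(M+N−1,N), where C(a,b) denotes the binomial coefficient and the inequality is between real numbers. -/
/-!
Multiplying by `N!` turns `C(M+N-1,N)` into the rising factorial `M (M+1) ⋯ (M+N-1)` and
`C(M,N)` into the falling factorial `M (M-1) ⋯ (M-N+1)`. Induction on `n` shows that the
falling factorial is at least `1 - n(n-1)/M` times the rising one: passing from `n` to `n+1`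
multiplies the two sides by `M - n` and `M + n` respectively, and
`(1 - (n+1)n/M) (M+n) = (1 - n(n-1)/M) (M-n) - 2n³/M`. Finally `n(n-1) < n²` for `n ≥ 1`.
-/

theorem one_sub_mul_ascFactorial_le_descFactorial {M : ℕ} :
    ∀ {n : ℕ}, n ≤ M →
      (1 - (n : ℝ) * (n - 1) / M) * M.ascFactorial n ≤ M.descFactorial n
  | 0, _ => by simp
  | n + 1, hn => by
    have hM : (0 : ℝ) < M := by exact_mod_cast (Nat.succ_pos n).trans_le hn
    have hMn : (0 : ℝ) ≤ M - n := by
      rw [sub_nonneg]; exact_mod_cast (Nat.le_succ n).trans hn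
    have ih := one_sub_mul_ascFactorial_le_descFactorial (n := n) (Nat.le_of_succ_le hn)
    rw [Nat.ascFactorial_succ, Nat.descFactorial_succ]
    push_cast [Nat.cast_sub (Nat.le_of_succ_le hn)]
    calc (1 - ((n : ℝ) + 1) * (n + 1 - 1) / M) * ((M + n) * M.ascFactorial n)
        = ((1 - (n : ℝ) * (n - 1) / M) * (M - n) - 2 * n ^ 3 / M) * M.ascFactorial n := by
          field_simp; ring
      _ ≤ (M - n) * ((1 - (n : ℝ) * (n - 1) / M) * M.ascFactorial n) := by
          have hasc : (0 : ℝ) ≤ M.ascFactorial n := Nat.cast_nonneg _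
          nlinarith [show (0 : ℝ) ≤ 2 * n ^ 3 / M by positivity]
      _ ≤ (M - n) * M.descFactorial n := mul_le_mul_of_nonneg_left ih hMn

/-- The number of collision-free outcomes `C(M,N)` of Boson Sampling with `M` modes and
`N` photons exceeds `(1 - N²/M)` times the total number `C(M+N-1,N)` of `N`-photon
outcomes over `M` modes, whenever `1 ≤ N ≤ M`. -/
theorem collisionFree_fraction (N M : ℕ) (h1 : 1 ≤ N) (h2 : N ≤ M) :
    (1 - (N : ℝ) ^ 2 / (M : ℝ)) * ((M + N - 1).choose N : ℝ) < ((M.choose N : ℝ)) := by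
  have hM : (0 : ℝ) < M := by exact_mod_cast h1.trans h2
  have hcoeff : 1 - (N : ℝ) ^ 2 / M < 1 - (N : ℝ) * (N - 1) / M := by
    have hN : (0 : ℝ) < N := by exact_mod_cast h1
    gcongr; nlinarith
  have hasc : (0 : ℝ) < M.ascFactorial N := by
    obtain ⟨m, rfl⟩ := Nat.exists_eq_add_one_of_ne_zero (by omega : M ≠ 0)
    exact_mod_cast Nat.ascFactorial_pos m N
  have hfact : (0 : ℝ) < N.factorial := by exact_mod_cast N.factorial_pos
  have key : (1 - (N : ℝ) ^ 2 / M) * M.ascFactorial N < M.descFactorial N :=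
    (mul_lt_mul_of_pos_right hcoeff hasc).trans_le (one_sub_mul_ascFactorial_le_descFactorial h2)
  rw [Nat.ascFactorial_eq_factorial_mul_choose', Nat.descFactorial_eq_factorial_mul_choose,
    Nat.cast_mul, Nat.cast_mul, mul_left_comm] at key
  exact lt_of_mul_lt_mul_left key hfact.le
end

section
/- For natural numbers N ≥ 1 and M ≥ 2N², the ratio of the number of collision outcomes to the number of collision-free outcomes satisfies (C(M+N−1,N) − C(M,N)) / C(M,N) < 2N²/M, as real numbers. -/
/-!
Comparing `∏ (M + N - 1 - i)` with `∏ (M - i)` factor by factor gives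
`C(M+N-1,N) (M-N+1)^N ≤ C(M,N) M^N`, and Bernoulli's inequality bounds `((M-N+1)/M)^N` below by
`1 - x` with `x = N(N-1)/M`. Hence `C(M,N) ≥ (1 - x) C(M+N-1,N)`, and as `x ≤ 1/2` the collision
ratio is at most `x / (1 - x) ≤ 2x < 2N²/M`.
-/

open Finset

theorem Nat.descFactorial_add_sub_one_mul_pow_le {M N : ℕ} (h : N ≤ M) :
    (M + N - 1).descFactorial N * (M - N + 1) ^ N ≤ M.descFactorial N * M ^ N := by
  rw [descFactorial_eq_prod_range, descFactorial_eq_prod_range, pow_eq_prod_const (M - N + 1),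
    pow_eq_prod_const M, ← prod_mul_distrib, ← prod_mul_distrib]
  refine prod_le_prod' fun i hi => ?_
  have hb : M - N + 1 ≤ M - i := by have := mem_range.mp hi; omega
  calc (M + N - 1 - i) * (M - N + 1) = (M - i) * (M - N + 1) + (N - 1) * (M - N + 1) := by
        rw [← add_mul]; congr 1; omega
    _ ≤ (M - i) * (M - N + 1) + (N - 1) * (M - i) := by gcongr
    _ = (M - i) * M := by rw [mul_comm (N - 1), ← mul_add]; congr 1; omega

theorem Nat.choose_add_sub_one_mul_pow_le {M N : ℕ} (h : N ≤ M) :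
    (M + N - 1).choose N * (M - N + 1) ^ N ≤ M.choose N * M ^ N := by
  have := descFactorial_add_sub_one_mul_pow_le h
  rw [descFactorial_eq_factorial_mul_choose, descFactorial_eq_factorial_mul_choose,
    mul_assoc, mul_assoc] at this
  exact Nat.le_of_mul_le_mul_left this N.factorial_pos

theorem Nat.cast_choose_add_sub_one_mul_le {M N : ℕ} (h : N ≤ M) (hM : 0 < M) :
    ((M + N - 1).choose N : ℝ) * (1 - N * (N - 1) / M) ≤ M.choose N := by
  have hMR : (0 : ℝ) < M := by exact_mod_cast hM
  have hchoose : ((M + N - 1).choose N : ℝ) * (M - N + 1) ^ N ≤ M.choose N * M ^ N := by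
    exact_mod_cast choose_add_sub_one_mul_pow_le h
  have hbernoulli : (M : ℝ) ^ N * (1 - N * (N - 1) / M) ≤ (M - N + 1) ^ N := by
    have hN : (N : ℝ) ≤ M := by exact_mod_cast h
    have := one_add_mul_le_pow (a := -((N - 1) / M : ℝ)) (by
      rw [neg_le_neg_iff, div_le_iff₀ hMR]; linarith) N
    calc (M : ℝ) ^ N * (1 - N * (N - 1) / M) = M ^ N * (1 + N * -((N - 1) / M)) := by ring
      _ ≤ M ^ N * (1 + -((N - 1) / M)) ^ N := by gcongr
      _ = (M - N + 1) ^ N := by rw [← mul_pow]; field_simp; ring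
  refine le_of_mul_le_mul_right ?_ (pow_pos hMR N)
  calc _ = ((M + N - 1).choose N : ℝ) * (M ^ N * (1 - N * (N - 1) / M)) := by ring
    _ ≤ ((M + N - 1).choose N : ℝ) * (M - N + 1) ^ N := by gcongr
    _ ≤ _ := hchoose

theorem sub_div_le_two_mul_of_mul_one_sub_le {a b x : ℝ} (hb : 0 < b) (hx₀ : 0 ≤ x)
    (hx : x ≤ 1 / 2) (h : a * (1 - x) ≤ b) : (a - b) / b ≤ 2 * x := by
  rw [div_le_iff₀ hb]
  nlinarith [mul_nonneg hx₀ (sub_nonneg.mpr hx)]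

/-- For `N ≥ 1` and `M ≥ 2N²`, the ratio of the number of collision outcomes
(`C(M+N-1,N) - C(M,N)`) to the number of collision-free outcomes (`C(M,N)`) of Boson
Sampling with `M` modes and `N` photons is smaller than `2N²/M`. -/
theorem collision_ratio_lt (N M : ℕ) (h1 : 1 ≤ N) (h2 : 2 * N ^ 2 ≤ M) :
    (((M + N - 1).choose N : ℝ) - (M.choose N : ℝ)) / (M.choose N : ℝ) <
      2 * (N : ℝ) ^ 2 / (M : ℝ) := by
  have hNM : N ≤ M := by nlinarith
  have hM : (0 : ℝ) < M := by exact_mod_cast (show 0 < M by omega)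
  have hN : (1 : ℝ) ≤ N := by exact_mod_cast h1
  have h2R : 2 * (N : ℝ) ^ 2 ≤ M := by exact_mod_cast h2
  have hx₀ : 0 ≤ (N : ℝ) * (N - 1) / M :=
    div_nonneg (mul_nonneg (by positivity) (by linarith)) hM.le
  have hx : (N : ℝ) * (N - 1) / M ≤ 1 / 2 := by rw [div_le_iff₀ hM]; nlinarith
  calc _ ≤ 2 * ((N : ℝ) * (N - 1) / M) :=
        sub_div_le_two_mul_of_mul_one_sub_le (by exact_mod_cast Nat.choose_pos hNM) hx₀ hx
          (Nat.cast_choose_add_sub_one_mul_le hNM (by omega))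
    _ < 2 * (N : ℝ) ^ 2 / M := by
        rw [← mul_div_assoc]; gcongr; nlinarith
end

section
/- Bosonic birthday paradox with a uniformly random collision-free input: let M, N be natural numbers with N ≥ 1 and M ≥ 2N². Let Ω be the finite set of configurations s : Fin M → ℕ with ∑_i s(i) = N, and let G ⊆ Ω be the set of collision-free configurations (those with s(i) ≤ 1 for all i). Then for every unitary matrix V indexed by Ω×Ω over ℂ, (1/|G|)·∑_{x∈G} ∑_{y∈Ω∖G} |V_{y,x}|² < 2N²/M. -/
/-!
The rows of a unitary matrix are unit vectors, so the total weight `∑_{x ∈ G, y ∉ G} |V_{y,x}|²`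
is at most `|Ω ∖ G|`, and the average over `x ∈ G` is at most `|Ω| / |G| - 1`.
By stars and bars `|Ω| / |G| = multichoose M N / choose M N = ∏_{k<N} (M + k) / (M - k)`,
and an induction on `N` bounds this product by `M / (M - N(N - 1))`, which is
below `1 + 2N²/M` once `M ≥ 2N²`.
-/

open Finset

namespace Matrix.UnitaryGroup

variable {n 𝕜 : Type*} [Fintype n] [DecidableEq n] [RCLike 𝕜]

theorem sum_norm_sq_apply (V : unitaryGroup n 𝕜) (i : n) :
    ∑ j, ‖(V : Matrix n n 𝕜) i j‖ ^ 2 = 1 := by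
  have h := congr_fun₂ (mem_unitaryGroup_iff.mp V.2) i i
  simp only [Matrix.mul_apply, star_apply, RCLike.star_def, RCLike.mul_conj, one_apply_eq] at h
  exact_mod_cast h

theorem sum_sum_compl_norm_sq_apply_le (V : unitaryGroup n 𝕜) (G : Finset n) :
    ∑ x ∈ G, ∑ y ∈ Gᶜ, ‖(V : Matrix n n 𝕜) y x‖ ^ 2 ≤ #Gᶜ := by
  rw [sum_comm, card_eq_sum_ones, Nat.cast_sum, Nat.cast_one]
  gcongr with y
  calc ∑ x ∈ G, ‖(V : Matrix n n 𝕜) y x‖ ^ 2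
      ≤ ∑ x, ‖(V : Matrix n n 𝕜) y x‖ ^ 2 :=
        sum_le_sum_of_subset_of_nonneg (subset_univ G) fun _ _ _ ↦ by positivity
    _ = 1 := sum_norm_sq_apply V y

end Matrix.UnitaryGroup

theorem card_sum_eq_multichoose (ι : Type*) [Fintype ι] (N : ℕ)
    [Fintype {s : ι → ℕ // ∑ i, s i = N}] :
    Fintype.card {s : ι → ℕ // ∑ i, s i = N} = (Fintype.card ι).multichoose N := by
  classical
  rw [← Fintype.card_congr (Sym.equivNatSumOfFintype ι N), Sym.card_sym_eq_multichoose]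

theorem sum_eq_card_filter_eq_one {ι : Type*} [Fintype ι] {s : ι → ℕ} (hs : ∀ i, s i ≤ 1) :
    ∑ i, s i = #{i | s i = 1} := by
  rw [card_filter]
  exact sum_congr rfl fun i _ ↦ by have := hs i; split_ifs <;> omega

theorem card_sum_eq_filter_le_one (ι : Type*) [Fintype ι] (N : ℕ)
    [Fintype {s : ι → ℕ // ∑ i, s i = N}] :
    #{s : {s : ι → ℕ // ∑ i, s i = N} | ∀ i, s.1 i ≤ 1} = (Fintype.card ι).choose N := by
  classical
  rw [← card_univ, ← card_powersetCard]
  refine card_bij (fun s _ ↦ ({i | s.1 i = 1} : Finset ι)) ?_ ?_ ?_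
  · intro s hs
    simp only [mem_filter, mem_univ, true_and] at hs
    rw [mem_powersetCard, ← sum_eq_card_filter_eq_one hs, s.2]
    exact ⟨subset_univ _, rfl⟩
  · intro s hs t ht hst
    simp only [mem_filter, mem_univ, true_and] at hs ht
    ext i
    have := hs i; have := ht i
    have := Finset.ext_iff.mp hst i
    simp only [mem_filter, mem_univ, true_and] at this
    omega
  · intro T hT
    rw [mem_powersetCard] at hT
    refine ⟨⟨fun i ↦ if i ∈ T then 1 else 0, ?_⟩, ?_, ?_⟩
    · rw [sum_boole, filter_mem_eq_inter, univ_inter, hT.2, Nat.cast_id]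
    · simp only [mem_filter, mem_univ, true_and]
      intro i; split_ifs <;> simp
    · ext i; simp

theorem Nat.cast_ascFactorial_mul_le {m n : ℕ} (h : n ≤ m) :
    (m.ascFactorial n : ℝ) * (m - n * (n - 1)) ≤ m * m.descFactorial n := by
  induction n with
  | zero => simp
  | succ n ih =>
    have hnm : (n : ℝ) ≤ m := by exact_mod_cast (Nat.le_succ n).trans h
    rw [Nat.ascFactorial_succ, Nat.descFactorial_succ, Nat.cast_mul, Nat.cast_mul,
      Nat.cast_sub (Nat.le_of_succ_le h)]
    push_cast
    -- the difference of the two quadratic factors is `2n³`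
    have hstep : ((m : ℝ) + n) * (m - (n + 1) * (n + 1 - 1)) ≤ (m - n) * (m - n * (n - 1)) := by
      nlinarith [pow_nonneg (Nat.cast_nonneg n : (0 : ℝ) ≤ n) 3]
    calc ((m + n) * m.ascFactorial n : ℝ) * (m - (n + 1) * (n + 1 - 1))
        ≤ (m.ascFactorial n : ℝ) * ((m - n) * (m - n * (n - 1))) := by
          rw [mul_comm _ (m.ascFactorial n : ℝ), mul_assoc]
          exact mul_le_mul_of_nonneg_left hstep (Nat.cast_nonneg _)
      _ = (m - n) * ((m.ascFactorial n : ℝ) * (m - n * (n - 1))) := by ring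
      _ ≤ (m - n) * (m * m.descFactorial n) :=
          mul_le_mul_of_nonneg_left (ih (by omega)) (sub_nonneg.2 hnm)
      _ = m * ((m - n) * m.descFactorial n) := by ring

theorem Nat.cast_mul_ascFactorial_lt {M N : ℕ} (hN : 1 ≤ N) (hM : 2 * N ^ 2 ≤ M) :
    (M * M.ascFactorial N : ℝ) < (M + 2 * N ^ 2) * M.descFactorial N := by
  have hNM : N ≤ M := by nlinarith
  have hN' : (1 : ℝ) ≤ N := by exact_mod_cast hN
  have hM' : 2 * (N : ℝ) ^ 2 ≤ M := by exact_mod_cast hM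
  have hc : 0 < (M : ℝ) - N * (N - 1) := by nlinarith
  have hdesc : (0 : ℝ) < M.descFactorial N := by exact_mod_cast Nat.descFactorial_pos.2 hNM
  have hsq : (M : ℝ) * M < (M + 2 * N ^ 2) * (M - N * (N - 1)) := by
    nlinarith [pow_pos (by linarith : (0 : ℝ) < N) 3]
  refine lt_of_mul_lt_mul_right ?_ hc.le
  calc (M * M.ascFactorial N : ℝ) * (M - N * (N - 1))
      ≤ M * (M * M.descFactorial N) := by
        rw [mul_assoc]
        exact mul_le_mul_of_nonneg_left (Nat.cast_ascFactorial_mul_le hNM) (Nat.cast_nonneg M)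
    _ = (M * M) * M.descFactorial N := by ring
    _ < ((M + 2 * N ^ 2) * (M - N * (N - 1))) * M.descFactorial N :=
        mul_lt_mul_of_pos_right hsq hdesc
    _ = (M + 2 * N ^ 2) * M.descFactorial N * (M - N * (N - 1)) := by ring

theorem Nat.multichoose_sub_choose_div_choose_lt {M N : ℕ} (hN : 1 ≤ N) (hM : 2 * N ^ 2 ≤ M) :
    ((M.multichoose N : ℝ) - M.choose N) / M.choose N < 2 * N ^ 2 / M := by
  have hNM : N ≤ M := by nlinarith
  have hchoose : (0 : ℝ) < M.choose N := by exact_mod_cast Nat.choose_pos hNM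
  have hM0 : (0 : ℝ) < M := by exact_mod_cast (by omega : 0 < M)
  have hasc : (M.ascFactorial N : ℝ) = N.factorial * M.multichoose N := by
    rw [Nat.multichoose_eq, Nat.ascFactorial_eq_factorial_mul_choose', Nat.cast_mul]
  have hdesc : (M.descFactorial N : ℝ) = N.factorial * M.choose N := by
    rw [Nat.descFactorial_eq_factorial_mul_choose, Nat.cast_mul]
  have key := Nat.cast_mul_ascFactorial_lt hN hM
  rw [hasc, hdesc] at key
  rw [div_lt_div_iff₀ hchoose hM0]
  have hfac : (0 : ℝ) < N.factorial := by exact_mod_cast N.factorial_pos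
  nlinarith

/-- **Bosonic birthday paradox with a uniformly random collision-free input.**
Let `Ω` be the set of configurations `s : Fin M → ℕ` of `N` photons in `M` modes
(`∑ i, s i = N`), and let `G ⊆ Ω` be the collision-free configurations (`s i ≤ 1` for all
`i`).  For `N ≥ 1`, `M ≥ 2N²`, and any unitary `V` indexed by `Ω`, the probability of
observing a collision outcome when the input is uniform over `G` and `V` is applied is
less than `2N²/M`. -/
theorem bosonic_birthday_paradox (M N : ℕ) (hN : 1 ≤ N) (hM : 2 * N ^ 2 ≤ M)
    [Fintype {s : Fin M → ℕ // ∑ i, s i = N}]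
    (V : Matrix.unitaryGroup {s : Fin M → ℕ // ∑ i, s i = N} ℂ) :
    (1 / ((Finset.univ.filter
        (fun x : {s : Fin M → ℕ // ∑ i, s i = N} => ∀ i, x.1 i ≤ 1)).card : ℝ)) *
      ∑ x ∈ Finset.univ.filter
          (fun x : {s : Fin M → ℕ // ∑ i, s i = N} => ∀ i, x.1 i ≤ 1),
        ∑ y ∈ (Finset.univ.filter
            (fun x : {s : Fin M → ℕ // ∑ i, s i = N} => ∀ i, x.1 i ≤ 1))ᶜ,
          ‖(V : Matrix _ _ ℂ) y x‖ ^ 2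
      < 2 * (N : ℝ) ^ 2 / (M : ℝ) := by
  set G := univ.filter fun x : {s : Fin M → ℕ // ∑ i, s i = N} ↦ ∀ i, x.1 i ≤ 1
  -- `G` is filtered with `Nat.decidableForallFin`, hence `convert` rather than `rw`
  have hG : #G = M.choose N := by
    convert card_sum_eq_filter_le_one (Fin M) N
    exact (Fintype.card_fin M).symm
  have hΩ := card_sum_eq_multichoose (Fin M) N
  rw [Fintype.card_fin] at hΩ
  have hGc : (#Gᶜ : ℝ) = M.multichoose N - M.choose N := by
    rw [card_compl, Nat.cast_sub (card_le_univ G), hΩ, hG]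
  calc 1 / (#G : ℝ) * ∑ x ∈ G, ∑ y ∈ Gᶜ, ‖(V : Matrix _ _ ℂ) y x‖ ^ 2
      ≤ 1 / (#G : ℝ) * #Gᶜ := by
        gcongr
        exact Matrix.UnitaryGroup.sum_sum_compl_norm_sq_apply_le V G
    _ = ((M.multichoose N : ℝ) - M.choose N) / M.choose N := by rw [hGc, hG]; ring
    _ < 2 * (N : ℝ) ^ 2 / (M : ℝ) := Nat.multichoose_sub_choose_div_choose_lt hN hM
end

section
/- Diagonal form of the Cayley transform: let H = L·D·L† be an n×n complex matrix with L unitary and D = diag(e^{iφ_1},…,e^{iφ_n}) for real numbers φ_1,…,φ_n. For θ ∈ ℝ define q(θ) := ∏_{j=1}^{n} (1 + iθ·e^{iφ_j/2}·sin(φ_j/2)) and, for each j, p_j(θ) := e^{iφ_j}·(1 − iθ·e^{−iφ_j/2}·sin(φ_j/2))·∏_{k≠j} (1 + iθ·e^{iφ_k/2}·sin(φ_k/2)). If q(θ) ≠ 0, then θ·H + (2−θ)·I is invertible and ((2−θ)·H + θ·I)·(θ·H + (2−θ)·I)⁻¹ = q(θ)⁻¹ · L·diag(p_1(θ),…,p_n(θ))·L†.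 -/
open Complex Matrix

lemma cayley_key1 (θ φ : ℝ) :
    1 + Complex.I * (θ:ℂ) * Complex.exp (Complex.I * ((φ/2 : ℝ):ℂ)) * ((Real.sin (φ/2)) : ℂ)
      = ((θ:ℂ) * Complex.exp (Complex.I * (φ:ℂ)) + (2 - θ)) / 2 := by
  have hz : Complex.I * (φ:ℂ) = Complex.I * ((φ/2:ℝ):ℂ) + Complex.I * ((φ/2:ℝ):ℂ) := by
    push_cast; ring
  rw [hz, Complex.exp_add, Complex.ofReal_sin, Complex.sin]
  have h1 : Complex.exp (Complex.I * ((φ/2:ℝ):ℂ)) * Complex.exp (-((φ/2:ℝ):ℂ) * Complex.I) = 1 := by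
    rw [← Complex.exp_add]; ring_nf; exact Complex.exp_zero
  have h2 : Complex.exp (((φ/2:ℝ):ℂ) * Complex.I) = Complex.exp (Complex.I * ((φ/2:ℝ):ℂ)) := by
    ring_nf
  rw [h2]
  have hI : Complex.I ^ 2 = -1 := Complex.I_sq
  set u := Complex.exp (Complex.I * ((φ/2:ℝ):ℂ))
  set v := Complex.exp (-((φ/2:ℝ):ℂ) * Complex.I)
  linear_combination ((θ:ℂ) * u * (v - u) / 2) * hI + (-(θ:ℂ)/2) * h1

lemma cayley_key2 (θ φ : ℝ) :
    Complex.exp (Complex.I * (φ:ℂ)) *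
      (1 - Complex.I * (θ:ℂ) * Complex.exp (-Complex.I * ((φ/2 : ℝ):ℂ)) * ((Real.sin (φ/2)) : ℂ))
      = (((2:ℂ) - θ) * Complex.exp (Complex.I * (φ:ℂ)) + θ) / 2 := by
  have hz : Complex.I * (φ:ℂ) = Complex.I * ((φ/2:ℝ):ℂ) + Complex.I * ((φ/2:ℝ):ℂ) := by
    push_cast; ring
  rw [hz, Complex.exp_add, Complex.ofReal_sin, Complex.sin]
  have h1 : Complex.exp (Complex.I * ((φ/2:ℝ):ℂ)) * Complex.exp (-Complex.I * ((φ/2:ℝ):ℂ)) = 1 := by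
    rw [← Complex.exp_add]; ring_nf; exact Complex.exp_zero
  have h2 : Complex.exp (((φ/2:ℝ):ℂ) * Complex.I) = Complex.exp (Complex.I * ((φ/2:ℝ):ℂ)) := by
    ring_nf
  have h3 : Complex.exp (-((φ/2:ℝ):ℂ) * Complex.I) = Complex.exp (-Complex.I * ((φ/2:ℝ):ℂ)) := by
    ring_nf
  rw [h2, h3]
  have hI : Complex.I ^ 2 = -1 := Complex.I_sq
  set u := Complex.exp (Complex.I * ((φ/2:ℝ):ℂ))
  set v := Complex.exp (-Complex.I * ((φ/2:ℝ):ℂ))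
  linear_combination ((-(θ:ℂ)*u^2*v^2/2 + (θ:ℂ)*u^3*v/2)) * hI + ((θ:ℂ)/2 * (u*v + 1 - u^2)) * h1

/-- **Diagonal form of the Cayley transform.** Let `H = L * D * Lᴴ` with `L` unitary and
`D = diag(e^{iφ_1}, …, e^{iφ_n})`.  Define
`q(θ) = ∏_j (1 + iθ e^{iφ_j/2} sin(φ_j/2))` and
`p_j(θ) = e^{iφ_j} (1 - iθ e^{-iφ_j/2} sin(φ_j/2)) ∏_{k≠j} (1 + iθ e^{iφ_k/2} sin(φ_k/2))`.
If `q(θ) ≠ 0` then `θ•H + (2-θ)•I` is invertible, and the Cayley transform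
`((2-θ)•H + θ•I) * (θ•H + (2-θ)•I)⁻¹` equals `q(θ)⁻¹ • (L * diag(p_1(θ),…,p_n(θ)) * Lᴴ)`. -/
theorem cayley_transform_diagonal_form {n : ℕ}
    (L : Matrix (Fin n) (Fin n) ℂ) (hL : L ∈ Matrix.unitaryGroup (Fin n) ℂ)
    (φ : Fin n → ℝ) (H : Matrix (Fin n) (Fin n) ℂ)
    (hH : H = L * Matrix.diagonal (fun j => Complex.exp (Complex.I * (φ j : ℂ))) * Lᴴ)
    (θ : ℝ)
    (hq : (∏ j, (1 + Complex.I * (θ : ℂ) * Complex.exp (Complex.I * ((φ j / 2 : ℝ) : ℂ)) *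
        (Real.sin (φ j / 2) : ℂ))) ≠ 0) :
    IsUnit ((θ : ℂ) • H + ((2 : ℂ) - (θ : ℂ)) • (1 : Matrix (Fin n) (Fin n) ℂ)) ∧
    (((2 : ℂ) - (θ : ℂ)) • H + (θ : ℂ) • (1 : Matrix (Fin n) (Fin n) ℂ)) *
        ((θ : ℂ) • H + ((2 : ℂ) - (θ : ℂ)) • (1 : Matrix (Fin n) (Fin n) ℂ))⁻¹ =
      (∏ j, (1 + Complex.I * (θ : ℂ) * Complex.exp (Complex.I * ((φ j / 2 : ℝ) : ℂ)) *
          (Real.sin (φ j / 2) : ℂ)))⁻¹ •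
        (L * Matrix.diagonal (fun j =>
          Complex.exp (Complex.I * (φ j : ℂ)) *
            (1 - Complex.I * (θ : ℂ) * Complex.exp (-Complex.I * ((φ j / 2 : ℝ) : ℂ)) *
              (Real.sin (φ j / 2) : ℂ)) *
            ∏ k ∈ Finset.univ.erase j,
              (1 + Complex.I * (θ : ℂ) * Complex.exp (Complex.I * ((φ k / 2 : ℝ) : ℂ)) *
                (Real.sin (φ k / 2) : ℂ))) * Lᴴ) := by
  set e : Fin n → ℂ := fun j => Complex.exp (Complex.I * (φ j : ℂ)) with he
  set a : Fin n → ℂ := fun j => (θ:ℂ) * e j + (2 - θ) with ha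
  set b : Fin n → ℂ := fun j => ((2:ℂ) - θ) * e j + θ with hb
  have hLL : L * Lᴴ = 1 := by
    have := (Matrix.mem_unitaryGroup_iff.mp hL)
    simpa [Matrix.star_eq_conjTranspose] using this
  have hLL' : Lᴴ * L = 1 := by
    have := (Matrix.mem_unitaryGroup_iff'.mp hL)
    simpa [Matrix.star_eq_conjTranspose] using this
  have hqf : ∀ j, (1 + Complex.I * (θ : ℂ) * Complex.exp (Complex.I * ((φ j / 2 : ℝ) : ℂ)) *
      (Real.sin (φ j / 2) : ℂ)) = a j / 2 := fun j => cayley_key1 θ (φ j)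
  have haj : ∀ j : Fin n, a j ≠ 0 := by
    intro j hj
    apply hq
    apply Finset.prod_eq_zero (Finset.mem_univ j)
    rw [hqf j, hj]; norm_num
  have hM : (θ : ℂ) • H + ((2 : ℂ) - (θ : ℂ)) • (1 : Matrix (Fin n) (Fin n) ℂ)
      = L * Matrix.diagonal a * Lᴴ := by
    have hdiag : Matrix.diagonal a
        = (θ:ℂ) • Matrix.diagonal e + ((2:ℂ) - θ) • (1 : Matrix (Fin n) (Fin n) ℂ) := by
      ext i k
      by_cases h : i = k
      · subst h
        simp [Matrix.diagonal_apply_eq, Matrix.one_apply_eq, ha, smul_eq_mul]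
      · simp [Matrix.diagonal_apply_ne _ h, Matrix.one_apply_ne h]
    rw [hH, hdiag]
    rw [Matrix.mul_add, Matrix.add_mul, Matrix.mul_smul, Matrix.smul_mul,
      Matrix.mul_smul, Matrix.smul_mul, Matrix.mul_one, hLL]
  have hB : ((2 : ℂ) - (θ : ℂ)) • H + (θ : ℂ) • (1 : Matrix (Fin n) (Fin n) ℂ)
      = L * Matrix.diagonal b * Lᴴ := by
    have hdiag : Matrix.diagonal b
        = ((2:ℂ) - θ) • Matrix.diagonal e + (θ:ℂ) • (1 : Matrix (Fin n) (Fin n) ℂ) := by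
      ext i k
      by_cases h : i = k
      · subst h
        simp [Matrix.diagonal_apply_eq, Matrix.one_apply_eq, hb, smul_eq_mul]
      · simp [Matrix.diagonal_apply_ne _ h, Matrix.one_apply_ne h]
    rw [hH, hdiag]
    rw [Matrix.mul_add, Matrix.add_mul, Matrix.mul_smul, Matrix.smul_mul,
      Matrix.mul_smul, Matrix.smul_mul, Matrix.mul_one, hLL]
  have hMN : (L * Matrix.diagonal a * Lᴴ) * (L * Matrix.diagonal (fun j => (a j)⁻¹) * Lᴴ) = 1 := by
    calc (L * Matrix.diagonal a * Lᴴ) * (L * Matrix.diagonal (fun j => (a j)⁻¹) * Lᴴ)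
        = L * (Matrix.diagonal a * ((Lᴴ * L) * Matrix.diagonal (fun j => (a j)⁻¹))) * Lᴴ := by
          simp only [Matrix.mul_assoc]
      _ = L * (Matrix.diagonal a * Matrix.diagonal (fun j => (a j)⁻¹)) * Lᴴ := by
          rw [hLL', Matrix.one_mul]
      _ = 1 := by
          rw [Matrix.diagonal_mul_diagonal]
          have h1 : (fun j => a j * (a j)⁻¹) = fun _ => (1:ℂ) := by
            funext j; exact mul_inv_cancel₀ (haj j)
          rw [h1, Matrix.diagonal_one, Matrix.mul_one, hLL]
  have hNM := mul_eq_one_comm.mp hMN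
  have hUnit : IsUnit ((θ : ℂ) • H + ((2 : ℂ) - (θ : ℂ)) • (1 : Matrix (Fin n) (Fin n) ℂ)) := by
    rw [hM]
    exact ⟨⟨_, _, hMN, hNM⟩, rfl⟩
  refine ⟨hUnit, ?_⟩
  have hinv : ((θ : ℂ) • H + ((2 : ℂ) - (θ : ℂ)) • (1 : Matrix (Fin n) (Fin n) ℂ))⁻¹
      = L * Matrix.diagonal (fun j => (a j)⁻¹) * Lᴴ := by
    rw [hM]; exact Matrix.inv_eq_right_inv hMN
  rw [hinv, hB]
  have hLHS : (L * Matrix.diagonal b * Lᴴ) * (L * Matrix.diagonal (fun j => (a j)⁻¹) * Lᴴ)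
      = L * Matrix.diagonal (fun j => b j * (a j)⁻¹) * Lᴴ := by
    calc (L * Matrix.diagonal b * Lᴴ) * (L * Matrix.diagonal (fun j => (a j)⁻¹) * Lᴴ)
        = L * (Matrix.diagonal b * ((Lᴴ * L) * Matrix.diagonal (fun j => (a j)⁻¹))) * Lᴴ := by
          simp only [Matrix.mul_assoc]
      _ = L * (Matrix.diagonal b * Matrix.diagonal (fun j => (a j)⁻¹)) * Lᴴ := by
          rw [hLL', Matrix.one_mul]
      _ = L * Matrix.diagonal (fun j => b j * (a j)⁻¹) * Lᴴ := by
          rw [Matrix.diagonal_mul_diagonal]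
  rw [hLHS]
  set q : ℂ := ∏ j, (1 + Complex.I * (θ : ℂ) * Complex.exp (Complex.I * ((φ j / 2 : ℝ) : ℂ)) *
      (Real.sin (φ j / 2) : ℂ)) with hqdef
  set p : Fin n → ℂ := fun j =>
      Complex.exp (Complex.I * (φ j : ℂ)) *
        (1 - Complex.I * (θ : ℂ) * Complex.exp (-Complex.I * ((φ j / 2 : ℝ) : ℂ)) *
          (Real.sin (φ j / 2) : ℂ)) *
        ∏ k ∈ Finset.univ.erase j,
          (1 + Complex.I * (θ : ℂ) * Complex.exp (Complex.I * ((φ k / 2 : ℝ) : ℂ)) *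
            (Real.sin (φ k / 2) : ℂ)) with hpdef
  have hentry : ∀ j, b j * (a j)⁻¹ = q⁻¹ * p j := by
    intro j
    have hp : p j = (b j / 2) * ∏ k ∈ Finset.univ.erase j, (a k / 2) := by
      rw [hpdef]
      simp only
      rw [cayley_key2 θ (φ j), Finset.prod_congr rfl (fun k _ => hqf k)]
    have hqsplit : q = (a j / 2) * ∏ k ∈ Finset.univ.erase j, (a k / 2) := by
      rw [hqdef]
      simp_rw [hqf]
      exact (Finset.mul_prod_erase Finset.univ _ (Finset.mem_univ j)).symm
    rw [hp, hqsplit]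
    have hP : (∏ k ∈ Finset.univ.erase j, (a k / 2)) ≠ 0 :=
      Finset.prod_ne_zero_iff.mpr (fun k _ => div_ne_zero (haj k) two_ne_zero)
    have key : ∀ (x y P : ℂ), x ≠ 0 → P ≠ 0 →
        y * x⁻¹ = (x / 2 * P)⁻¹ * (y / 2 * P) := by
      intro x y P hx hPP
      field_simp
    exact key (a j) (b j) _ (haj j) hP
  have hdiagEq : Matrix.diagonal (fun j => b j * (a j)⁻¹) = q⁻¹ • Matrix.diagonal p := by
    ext i k
    by_cases h : i = k
    · subst h
      simp [Matrix.diagonal_apply_eq, smul_eq_mul, hentry i]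
    · simp [Matrix.diagonal_apply_ne _ h]
  rw [hdiagEq, Matrix.mul_smul, Matrix.smul_mul]
end

section
/- Polynomial numerator of a Cayley-perturbed linear optical circuit: fix M, m, and for each i ∈ {1,…,m} a pair of distinct modes a_i ≠ b_i in Fin M, a 2×2 unitary G_i, a 2×2 unitary L_i and real phases φ_{i,1}, φ_{i,2}. For θ ∈ ℝ set q_i(θ) := ∏_{j=1,2} (1 + iθ·e^{iφ_{i,j}/2}·sin(φ_{i,j}/2)), p_{i,j}(θ) := e^{iφ_{i,j}}·(1 − iθ·e^{−iφ_{i,j}/2}·sin(φ_{i,j}/2))·(1 + iθ·e^{iφ_{i,3−j}/2}·sin(φ_{i,3−j}/2)), and H_i(θ) := q_i(θ)⁻¹ · L_i·diag(p_{i,1}(θ), p_{i,2}(θ))·L_i† (defined when q_i(θ) ≠ 0). Let E_i(θ) be the M×M matrix acting as H_i(θ)·G_i on the two modes {a_i, b_i} and as the identity on all other modes, and let V(θ) := E_m(θ)·E_{m−1}(θ)⋯E_1(θ). Then there exists an M×M matrix N whose entries are complex polynomials of degree at most 2m such that, for every real θ with q_i(θ) ≠ 0 for all i, (∏_{i=1}^{m}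 q_i(θ)) · V(θ) equals the entrywise evaluation of N at θ. -/
/-!
Multiplying the `i`-th gate by its Cayley denominator `q_i(θ)` clears the inverse in `H_i(θ)`:
`q_i(θ) • E_i(θ)` is the evaluation at `θ` of a matrix of polynomials of degree at most `2`,
namely `L_i · diag(p_{i,1}, p_{i,2}) · L_iᴴ · G_i` on the modes `a_i, b_i` and `q_i` on the
diagonal elsewhere. Evaluation is a ring homomorphism and the scalars commute with all matrices,
so the product of these `m` numerators evaluates to `(∏ q_i(θ)) • V(θ)`, and entrywise degrees
add up along the product.
-/

open Matrix

/-- The Cayley denominator `q(θ) = ∏_{j ∈ Fin 2} (1 + iθ e^{iφ_j/2} sin(φ_j/2))`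
of a two-mode gate with eigenphases `φ : Fin 2 → ℝ`. -/
noncomputable def cayleyQ (φ : Fin 2 → ℝ) (θ : ℝ) : ℂ :=
  ∏ j : Fin 2, (1 + Complex.I * (θ : ℂ) * Complex.exp (Complex.I * ((φ j / 2 : ℝ) : ℂ)) *
    (Real.sin (φ j / 2) : ℂ))

/-- The Cayley numerator eigenvalue
`p_j(θ) = e^{iφ_j} (1 - iθ e^{-iφ_j/2} sin(φ_j/2)) (1 + iθ e^{iφ_{3-j}/2} sin(φ_{3-j}/2))`
of a two-mode gate; here `j + 1 : Fin 2` is the index other than `j`. -/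
noncomputable def cayleyP (φ : Fin 2 → ℝ) (j : Fin 2) (θ : ℝ) : ℂ :=
  Complex.exp (Complex.I * ((φ j : ℝ) : ℂ)) *
    (1 - Complex.I * (θ : ℂ) * Complex.exp (-Complex.I * ((φ j / 2 : ℝ) : ℂ)) *
      (Real.sin (φ j / 2) : ℂ)) *
    (1 + Complex.I * (θ : ℂ) * Complex.exp (Complex.I * ((φ (j + 1) / 2 : ℝ) : ℂ)) *
      (Real.sin (φ (j + 1) / 2) : ℂ))

/-- The Cayley transform of the `2×2` unitary `L · diag(e^{iφ_1}, e^{iφ_2}) · Lᴴ`,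
in diagonal form: `H(θ) = q(θ)⁻¹ • (L · diag(p_1(θ), p_2(θ)) · Lᴴ)`. -/
noncomputable def cayleyGate (L : Matrix (Fin 2) (Fin 2) ℂ) (φ : Fin 2 → ℝ) (θ : ℝ) :
    Matrix (Fin 2) (Fin 2) ℂ :=
  (cayleyQ φ θ)⁻¹ • (L * Matrix.diagonal (fun j => cayleyP φ j θ) * Lᴴ)

/-- The `M × M` matrix of a two-mode gate: it acts as the `2×2` matrix `A` on the two
modes `a ≠ b` and as the identity on all other modes. -/
def twoModeGate (M : ℕ) (a b : Fin M) (A : Matrix (Fin 2) (Fin 2) ℂ) :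
    Matrix (Fin M) (Fin M) ℂ := fun x y =>
  if x = a then (if y = a then A 0 0 else if y = b then A 0 1 else 0)
  else if x = b then (if y = a then A 1 0 else if y = b then A 1 1 else 0)
  else (if y = x then 1 else 0)

open Polynomial

theorem List.prod_map_smul_prod_map {ι α β : Type*} [CommMonoid α] [Monoid β] [MulAction α β]
    [IsScalarTower α β β] [SMulCommClass α β β] (l : List ι) (c : ι → α) (f : ι → β) :
    (l.map fun i => c i • f i).prod = (l.map c).prod • (l.map f).prod := by
  induction l with
  | nil => simp
  | cons i l ih => simp only [List.map_cons, List.prod_cons, ih, smul_mul_smul_comm]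

namespace Matrix

variable {R : Type*} [Semiring R] {m n : Type*}

def NatDegreeLE (A : Matrix m n R[X]) (d : ℕ) : Prop :=
  ∀ i j, (A i j).natDegree ≤ d

theorem NatDegreeLE.degree_le {A : Matrix m n R[X]} {d : ℕ} (h : A.NatDegreeLE d) (i : m)
    (j : n) : (A i j).degree ≤ d :=
  degree_le_of_natDegree_le (h i j)

theorem natDegreeLE_map_C (A : Matrix m n R) : (A.map C).NatDegreeLE 0 := fun i j => by simp

theorem natDegreeLE_diagonal [DecidableEq n] {p : n → R[X]} {d : ℕ}
    (h : ∀ i, (p i).natDegree ≤ d) : (diagonal p).NatDegreeLE d := by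
  intro i j
  by_cases hij : i = j
  · simpa [hij] using h j
  · simp [hij]

theorem NatDegreeLE.mul {l : Type*} [Fintype m] {A : Matrix l m R[X]} {B : Matrix m n R[X]}
    {d e : ℕ} (hA : A.NatDegreeLE d) (hB : B.NatDegreeLE e) : (A * B).NatDegreeLE (d + e) :=
  fun i j => natDegree_sum_le_of_forall_le _ _ fun k _ =>
    natDegree_mul_le.trans (add_le_add (hA i k) (hB k j))

theorem NatDegreeLE.list_prod [Fintype n] [DecidableEq n] {l : List (Matrix n n R[X])} {d : ℕ}
    (h : ∀ A ∈ l, A.NatDegreeLE d) : l.prod.NatDegreeLE (d * l.length) := by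
  induction l with
  | nil => intro i j; by_cases hij : i = j <;> simp [hij]
  | cons A l ih =>
    rw [List.prod_cons, List.length_cons, Nat.mul_succ, add_comm]
    exact (h A List.mem_cons_self).mul (ih fun B hB => h B (List.mem_cons_of_mem A hB))

end Matrix

def twoModeMatrix {R : Type*} [Zero R] (M : ℕ) (a b : Fin M) (A : Matrix (Fin 2) (Fin 2) R)
    (d : R) : Matrix (Fin M) (Fin M) R := fun x y =>
  if x = a then (if y = a then A 0 0 else if y = b then A 0 1 else 0)
  else if x = b then (if y = a then A 1 0 else if y = b then A 1 1 else 0)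
  else (if y = x then d else 0)

theorem smul_twoModeGate (M : ℕ) (a b : Fin M) (A : Matrix (Fin 2) (Fin 2) ℂ) (c : ℂ) :
    c • twoModeGate M a b A = twoModeMatrix M a b (c • A) c := by
  ext x y
  simp only [Matrix.smul_apply, twoModeGate, twoModeMatrix, smul_eq_mul]
  split_ifs <;> simp

theorem twoModeMatrix_map {R S : Type*} [Zero R] [Zero S] (M : ℕ) (a b : Fin M)
    (A : Matrix (Fin 2) (Fin 2) R) (d : R) {f : R → S} (hf : f 0 = 0) :
    (twoModeMatrix M a b A d).map f = twoModeMatrix M a b (A.map f) (f d) := by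
  ext x y
  simp only [map_apply, twoModeMatrix]
  split_ifs <;> simp [hf]

theorem natDegreeLE_twoModeMatrix {R : Type*} [Semiring R] (M : ℕ) (a b : Fin M)
    {A : Matrix (Fin 2) (Fin 2) R[X]} {p : R[X]} {d : ℕ} (hA : A.NatDegreeLE d)
    (hp : p.natDegree ≤ d) : (twoModeMatrix M a b A p).NatDegreeLE d := by
  intro x y
  simp only [twoModeMatrix]
  split_ifs <;> first | exact hA _ _ | exact hp | simp

noncomputable def cayleyQPoly (φ : Fin 2 → ℝ) : ℂ[X] :=
  ∏ j : Fin 2, (1 + C (Complex.I * Complex.exp (Complex.I * ((φ j / 2 : ℝ) : ℂ)) *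
    (Real.sin (φ j / 2) : ℂ)) * X)

noncomputable def cayleyPPoly (φ : Fin 2 → ℝ) (j : Fin 2) : ℂ[X] :=
  C (Complex.exp (Complex.I * ((φ j : ℝ) : ℂ))) *
    (1 - C (Complex.I * Complex.exp (-Complex.I * ((φ j / 2 : ℝ) : ℂ)) *
      (Real.sin (φ j / 2) : ℂ)) * X) *
    (1 + C (Complex.I * Complex.exp (Complex.I * ((φ (j + 1) / 2 : ℝ) : ℂ)) *
      (Real.sin (φ (j + 1) / 2) : ℂ)) * X)

theorem eval_cayleyQPoly (φ : Fin 2 → ℝ) (θ : ℝ) :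
    (cayleyQPoly φ).eval (θ : ℂ) = cayleyQ φ θ := by
  simp only [cayleyQPoly, cayleyQ, eval_prod, eval_add, eval_one, eval_mul, eval_C, eval_X]
  exact Finset.prod_congr rfl fun j _ => by ring

theorem eval_cayleyPPoly (φ : Fin 2 → ℝ) (j : Fin 2) (θ : ℝ) :
    (cayleyPPoly φ j).eval (θ : ℂ) = cayleyP φ j θ := by
  simp only [cayleyPPoly, cayleyP, eval_mul, eval_add, eval_sub, eval_one, eval_C, eval_X]
  ring

theorem natDegree_cayleyQPoly_le (φ : Fin 2 → ℝ) : (cayleyQPoly φ).natDegree ≤ 2 := by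
  simp only [cayleyQPoly, Fin.prod_univ_two]
  compute_degree

theorem natDegree_cayleyPPoly_le (φ : Fin 2 → ℝ) (j : Fin 2) :
    (cayleyPPoly φ j).natDegree ≤ 2 := by
  unfold cayleyPPoly
  compute_degree

noncomputable def cayleyGateNumerator (L G : Matrix (Fin 2) (Fin 2) ℂ) (φ : Fin 2 → ℝ) :
    Matrix (Fin 2) (Fin 2) ℂ[X] :=
  L.map C * diagonal (cayleyPPoly φ) * Lᴴ.map C * G.map C

theorem natDegreeLE_cayleyGateNumerator (L G : Matrix (Fin 2) (Fin 2) ℂ) (φ : Fin 2 → ℝ) :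
    (cayleyGateNumerator L G φ).NatDegreeLE 2 :=
  ((((natDegreeLE_map_C L).mul (natDegreeLE_diagonal (natDegree_cayleyPPoly_le φ))).mul
    (natDegreeLE_map_C Lᴴ)).mul (natDegreeLE_map_C G) :)

theorem map_eval_cayleyGateNumerator (L G : Matrix (Fin 2) (Fin 2) ℂ) (φ : Fin 2 → ℝ) (θ : ℝ)
    (hq : cayleyQ φ θ ≠ 0) :
    (cayleyGateNumerator L G φ).map (eval (θ : ℂ)) = cayleyQ φ θ • (cayleyGate L φ θ * G) := by
  have hC (A : Matrix (Fin 2) (Fin 2) ℂ) : (A.map C).map (eval (θ : ℂ)) = A := by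
    ext; simp
  have hnum : (cayleyGateNumerator L G φ).map (eval (θ : ℂ)) =
      L * diagonal (fun j => cayleyP φ j θ) * Lᴴ * G := by
    change (evalRingHom (θ : ℂ)).mapMatrix _ = _
    simp only [cayleyGateNumerator, map_mul, RingHom.mapMatrix_apply, coe_evalRingHom, hC,
      diagonal_map (eval_zero), eval_cayleyPPoly]
  rw [hnum, cayleyGate, smul_mul_assoc, smul_smul, mul_inv_cancel₀ hq, one_smul]

noncomputable def cayleyTwoModeNumerator (M : ℕ) (a b : Fin M) (L G : Matrix (Fin 2) (Fin 2) ℂ)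
    (φ : Fin 2 → ℝ) : Matrix (Fin M) (Fin M) ℂ[X] :=
  twoModeMatrix M a b (cayleyGateNumerator L G φ) (cayleyQPoly φ)

theorem map_eval_cayleyTwoModeNumerator (M : ℕ) (a b : Fin M) (L G : Matrix (Fin 2) (Fin 2) ℂ)
    (φ : Fin 2 → ℝ) (θ : ℝ) (hq : cayleyQ φ θ ≠ 0) :
    (cayleyTwoModeNumerator M a b L G φ).map (eval (θ : ℂ)) =
      cayleyQ φ θ • twoModeGate M a b (cayleyGate L φ θ * G) := by
  rw [cayleyTwoModeNumerator, twoModeMatrix_map _ _ _ _ _ (eval_zero), smul_twoModeGate,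
    map_eval_cayleyGateNumerator L G φ θ hq, eval_cayleyQPoly]

theorem cayley_circuit_polynomial_numerator_general (M m : ℕ)
    (a b : Fin m → Fin M)
    (G L : Fin m → Matrix (Fin 2) (Fin 2) ℂ)
    (φ : Fin m → Fin 2 → ℝ) :
    ∃ Nmat : Matrix (Fin M) (Fin M) (Polynomial ℂ),
      (∀ x y, (Nmat x y).degree ≤ (2 * m : ℕ)) ∧
      ∀ θ : ℝ, (∀ i, cayleyQ (φ i) θ ≠ 0) →
        (∏ i, cayleyQ (φ i) θ) •
            ((List.finRange m).reverse.map (fun i =>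
              twoModeGate M (a i) (b i) (cayleyGate (L i) (φ i) θ * G i))).prod =
          Nmat.map (fun P => P.eval (θ : ℂ)) := by
  set gates := (List.finRange m).reverse
  let N i := cayleyTwoModeNumerator M (a i) (b i) (L i) (G i) (φ i)
  refine ⟨(gates.map N).prod, fun x y => ?_, fun θ hq => ?_⟩
  · have hN : ∀ A ∈ gates.map N, A.NatDegreeLE 2 := by
      simpa only [List.forall_mem_map] using fun i _ => show (N i).NatDegreeLE 2 from
        natDegreeLE_twoModeMatrix _ _ _ (natDegreeLE_cayleyGateNumerator _ _ _)
          (natDegree_cayleyQPoly_le _)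
    simpa [gates] using (NatDegreeLE.list_prod hN).degree_le x y
  · have hprod : ∏ i, cayleyQ (φ i) θ = (gates.map fun i => cayleyQ (φ i) θ).prod := by
      rw [Fin.prod_univ_def, List.map_reverse, List.prod_reverse]
    rw [hprod, ← List.prod_map_smul_prod_map]
    change _ = (evalRingHom (θ : ℂ)).mapMatrix (gates.map N).prod
    rw [map_list_prod, List.map_map]
    exact congrArg List.prod (List.map_congr_left fun i _ =>
      (map_eval_cayleyTwoModeNumerator _ _ _ _ _ _ θ (hq i)).symm)

/-- **Polynomial numerator of a Cayley-perturbed linear optical circuit.**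
For the circuit `V(θ) = E_m(θ) ⋯ E_1(θ)` whose `i`-th two-mode gate is the Cayley
perturbation `H_i(θ) · G_i` on modes `a_i ≠ b_i`, there is a matrix `Nmat` of complex
polynomials of degree at most `2m` such that `(∏_i q_i(θ)) • V(θ)` equals the entrywise
evaluation of `Nmat` at `θ`, for every real `θ` with all `q_i(θ) ≠ 0`. -/
theorem cayley_circuit_polynomial_numerator (M m : ℕ)
    (a b : Fin m → Fin M) (hab : ∀ i, a i ≠ b i)
    (G L : Fin m → Matrix (Fin 2) (Fin 2) ℂ)
    (hG : ∀ i, G i ∈ Matrix.unitaryGroup (Fin 2) ℂ)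
    (hL : ∀ i, L i ∈ Matrix.unitaryGroup (Fin 2) ℂ)
    (φ : Fin m → Fin 2 → ℝ) :
    ∃ Nmat : Matrix (Fin M) (Fin M) (Polynomial ℂ),
      (∀ x y, (Nmat x y).degree ≤ (2 * m : ℕ)) ∧
      ∀ θ : ℝ, (∀ i, cayleyQ (φ i) θ ≠ 0) →
        (∏ i, cayleyQ (φ i) θ) •
            ((List.finRange m).reverse.map (fun i =>
              twoModeGate M (a i) (b i) (cayleyGate (L i) (φ i) θ * G i))).prod =
          Nmat.map (fun P => P.eval (θ : ℂ)) :=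
  cayley_circuit_polynomial_numerator_general M m a b G L φ
end

section
/- Routing permutations through the Kaleidoscope architecture BB* (Beneš-type routing): for every n ≥ 1 and every permutation σ of Fin(2^n), there exist permutations τ_1, …, τ_{2n} of Fin(2^n) such that σ = τ_{2n} ∘ τ_{2n−1} ∘ ⋯ ∘ τ_1, and for each j every x satisfies τ_j(x) ∈ { x, x XOR 2^{b_j} } (XOR on the underlying natural-number indices), where the bit sequence is (b_1, …, b_{2n}) = (n−1, n−2, …, 1, 0, 0, 1, …, n−2, n−1). -/
/-!
Split `Fin (2 ^ (n + 1))` by its top bit into two halves `X ⊕ X`; the gates of a top-bit layer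
are the pairs `{inl y, inr y}`. Every permutation `σ` of `X ⊕ X` factors as
`(top-bit layer) * (a ⊕ b) * (top-bit layer)`. For this, colour `X ⊕ X` with two colours so that
the two elements of each gate, and the two `σ`-preimages of each gate, get different colours;
this is possible because the two perfect matchings together only have cycles of even length.
The first layer sends each colour class into its own half, and the last layer sends the
`σ`-image of each class back into that half. The permutations `a`, `b` of the halves are routed
recursively and in parallel on the lower bits, which gives the bit sequence
`n, (n - 1, …, 0, 0, …, n - 1), n`.
-/

namespace Nat

theorem two_pow_add_xor_of_lt {n y z : ℕ} (hy : y < 2 ^ n) (hz : z < 2 ^ n) :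
    (2 ^ n + y) ^^^ z = 2 ^ n + (y ^^^ z) := by
  apply Nat.eq_of_testBit_eq
  intro i
  have h := Nat.testBit_two_pow_mul_add 1 hy i
  have h' := Nat.testBit_two_pow_mul_add 1 (Nat.xor_lt_two_pow hy hz) i
  rw [mul_one] at h h'
  rw [testBit_xor, h, h']
  split_ifs with hi
  · simp
  · simp [Nat.testBit_lt_two_pow (lt_of_lt_of_le hz (Nat.pow_le_pow_right two_pos (not_lt.1 hi)))]

theorem xor_two_pow_of_lt {n y : ℕ} (hy : y < 2 ^ n) : y ^^^ 2 ^ n = 2 ^ n + y := by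
  simpa [Nat.xor_comm] using two_pow_add_xor_of_lt (Nat.two_pow_pos n) hy

theorem two_pow_add_xor_two_pow {n y : ℕ} (hy : y < 2 ^ n) : (2 ^ n + y) ^^^ 2 ^ n = y := by
  rw [← xor_two_pow_of_lt hy, Nat.xor_assoc, Nat.xor_self, Nat.xor_zero]

end Nat

namespace List

variable {ι α β γ : Type*}

theorem forall₂_zipWith {R : ι → α → Prop} {S : ι → β → Prop} {T : ι → γ → Prop}
    {f : α → β → γ} {l : List ι} {l₁ : List α} {l₂ : List β} (h₁ : Forall₂ R l l₁)
    (h₂ : Forall₂ S l l₂) (h : ∀ i ∈ l, ∀ a b, R i a → S i b → T i (f a b)) :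
    Forall₂ T l (zipWith f l₁ l₂) := by
  induction h₁ generalizing l₂ with
  | nil => cases h₂; exact .nil
  | cons hR _ ih =>
    obtain _ | ⟨hS, h₂⟩ := h₂
    exact .cons (h _ mem_cons_self _ _ hR hS) (ih h₂ fun i hi => h i (mem_cons_of_mem _ hi))

theorem prod_zipWith_monoidHom {M N P : Type*} [Monoid M] [Monoid N] [Monoid P]
    (φ : M × N →* P) {l₁ : List M} {l₂ : List N} (h : l₁.length = l₂.length) :
    (zipWith (fun a b => φ (a, b)) l₁ l₂).prod = φ (l₁.prod, l₂.prod) := by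
  induction l₁ generalizing l₂ with
  | nil =>
    cases l₂ with
    | nil => exact (map_one φ).symm
    | cons => simp at h
  | cons a l₁ ih =>
    cases l₂ with
    | nil => simp at h
    | cons b l₂ =>
      simp only [length_cons, add_left_inj] at h
      simp only [zipWith_cons_cons, prod_cons, ih h, ← map_mul, Prod.mk_mul_mk]

end List

namespace Equiv.Perm

variable {α : Type*}

theorem zpow_two_mul_apply_ne {q r : Perm α} (hconj : r * q * r⁻¹ = q⁻¹) (hr : ∀ x, r x ≠ x)
    (m : ℤ) (x : α) : (q ^ (2 * m)) x ≠ r x := by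
  intro h
  apply hr ((q ^ m) x)
  calc r ((q ^ m) x) = (r * q ^ m * r⁻¹) (r x) := by simp
    _ = (q ^ (-m)) ((q ^ (2 * m)) x) := by rw [← conj_zpow, hconj, inv_zpow', h]
    _ = (q ^ m) x := by rw [← mul_apply, ← zpow_add]; ring_nf

theorem not_sameCycle_mul_apply {i j : Perm α} (hi : i * i = 1) (hj : j * j = 1)
    (hi' : ∀ x, i x ≠ x) (hj' : ∀ x, j x ≠ x) (x : α) : ¬ (j * i).SameCycle x (i x) := by
  have hconj_i : i * (j * i) * i⁻¹ = (j * i)⁻¹ := by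
    rw [mul_inv_rev, inv_eq_of_mul_eq_one_right hi, inv_eq_of_mul_eq_one_right hj]
    simp only [mul_assoc, hi, mul_one]
  have hconj_j : j * (j * i) * j⁻¹ = (j * i)⁻¹ := by
    rw [mul_inv_rev, inv_eq_of_mul_eq_one_right hi, ← mul_assoc, hj, one_mul]
  rintro ⟨k, hk⟩
  obtain ⟨m, rfl | rfl⟩ := Int.even_or_odd' k
  · exact zpow_two_mul_apply_ne hconj_i hi' m x hk
  · refine zpow_two_mul_apply_ne hconj_j hj' (m + 1) x ?_
    calc ((j * i) ^ (2 * (m + 1))) x = (j * i) (((j * i) ^ (2 * m + 1)) x) := by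
          rw [← mul_apply, ← zpow_one_add]; ring_nf
      _ = j x := by rw [hk, ← mul_apply, mul_assoc, hi, mul_one]

theorem exists_two_coloring_of_involutions {i j : Perm α} (hi : i * i = 1) (hj : j * j = 1)
    (hi' : ∀ x, i x ≠ x) (hj' : ∀ x, j x ≠ x) :
    ∃ c : α → Bool, ∀ x, c (i x) = !c x ∧ c (j x) = !c x := by
  -- `i` swaps `⟨j * i⟩`-orbits in pairs of distinct orbits; colour an orbit by whether it is the
  -- smaller one of its pair.
  let orbit := Quotient.mk (SameCycle.setoid (j * i))
  let _ : LinearOrder (Quotient (SameCycle.setoid (j * i))) :=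
    WellOrderingRel.isWellOrder.linearOrder
  have hii (x : α) : i (i x) = x := by rw [← mul_apply, hi, one_apply]
  have hjj (x : α) : j (j x) = x := by rw [← mul_apply, hj, one_apply]
  have hne (x : α) : orbit (i x) ≠ orbit x := fun h =>
    not_sameCycle_mul_apply hi hj hi' hj' x (Quotient.exact h).symm
  have hstep (x : α) : orbit ((j * i) x) = orbit x :=
    Quotient.sound (sameCycle_apply_left.2 (SameCycle.refl _ _))
  have hflip (x y : α) (h : orbit y ≠ orbit x) :
      decide (orbit y < orbit x) = !decide (orbit x < orbit y) := by
    simp only [← decide_not, not_lt, h.le_iff_lt]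
  refine ⟨fun x => decide (orbit x < orbit (i x)), fun x => ⟨?_, ?_⟩⟩
  · simp only [hii]
    exact hflip x (i x) (hne x)
  · have hj_orbit : orbit (j x) = orbit (i x) := by rw [← hstep (i x), mul_apply, hii]
    have hij_orbit : orbit (i (j x)) = orbit x := by rw [← hstep (i (j x)), mul_apply, hii, hjj]
    simp only [hj_orbit, hij_orbit]
    exact hflip x (i x) (hne x)

end Equiv.Perm

namespace Benes

open Equiv

section crossLayer

variable {X : Type*}

def crossLayer (s : X → Bool) : Perm (X ⊕ X) :=
  Function.Involutive.toPerm (fun z => if s (Sum.elim id id z) then z.swap else z)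
    (by rintro (y | y) <;> cases h : s y <;> simp [h])

theorem crossLayer_apply_inl (s : X → Bool) (y : X) :
    crossLayer s (.inl y) = if s y then .inr y else .inl y := rfl

theorem crossLayer_apply_inr (s : X → Bool) (y : X) :
    crossLayer s (.inr y) = if s y then .inl y else .inr y := rfl

theorem crossLayer_mul_self (s : X → Bool) : crossLayer s * crossLayer s = 1 :=
  Perm.ext (Function.Involutive.toPerm_involutive _)

theorem isRight_crossLayer {c : X ⊕ X → Bool} (hc : ∀ z, c z.swap = !c z) (z : X ⊕ X) :
    (crossLayer (fun y => c (.inl y)) z).isRight = c z := by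
  rcases z with y | y
  · cases h : c (.inl y) <;> simp [crossLayer_apply_inl, h]
  · rw [crossLayer_apply_inr, ← Sum.swap_inl, hc]
    cases c (.inl y) <;> rfl

theorem apply_crossLayer_eq_isRight {c : X ⊕ X → Bool} (hc : ∀ z, c z.swap = !c z)
    (z : X ⊕ X) : c (crossLayer (fun y => c (.inl y)) z) = z.isRight := by
  rw [← isRight_crossLayer hc, ← Perm.mul_apply, crossLayer_mul_self, Perm.one_apply]

theorem exists_eq_crossLayer_mul_sumCongr_mul_crossLayer [Finite X] (σ : Perm (X ⊕ X)) :
    ∃ (s t : X → Bool) (a b : Perm X), σ = crossLayer t * Perm.sumCongr a b * crossLayer s := by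
  let i : Perm (X ⊕ X) := Equiv.sumComm X X
  have hi : i * i = 1 := Perm.ext Sum.swap_swap
  have hi' (z : X ⊕ X) : i z ≠ z := by rcases z with y | y <;> simp [i]
  have hj : σ⁻¹ * i * σ * (σ⁻¹ * i * σ) = 1 := by
    rw [show σ⁻¹ * i * σ * (σ⁻¹ * i * σ) = σ⁻¹ * (i * i) * σ by group, hi]
    group
  have hj' (z : X ⊕ X) : (σ⁻¹ * i * σ) z ≠ z := fun h =>
    hi' (σ z) (Perm.inv_eq_iff_eq.1 h)
  obtain ⟨c, hc⟩ := Perm.exists_two_coloring_of_involutions hi hj hi' hj'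
  have hc' (z : X ⊕ X) : c (σ⁻¹ z.swap) = !c (σ⁻¹ z) := by
    simpa [i] using (hc (σ⁻¹ z)).2
  set s : X → Bool := fun y => c (.inl y)
  set t : X → Bool := fun y => c (σ⁻¹ (.inl y))
  have hM (z : X ⊕ X) : ((crossLayer t * σ * crossLayer s) z).isRight = z.isRight := by
    rw [Perm.mul_apply, Perm.mul_apply, isRight_crossLayer (c := fun z => c (σ⁻¹ z)) hc',
      Perm.coe_inv, symm_apply_apply, apply_crossLayer_eq_isRight (fun z => (hc z).1)]
  obtain ⟨⟨a, b⟩, hab⟩ := Perm.mem_sumCongrHom_range_of_perm_mapsTo_inl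
    (σ := crossLayer t * σ * crossLayer s) (by
      rintro _ ⟨y, rfl⟩
      obtain ⟨y', hy'⟩ := Sum.isLeft_iff.1 (Sum.isRight_eq_false.1 (hM (.inl y)))
      exact ⟨y', hy'.symm⟩)
  refine ⟨s, t, a, b, ?_⟩
  change Perm.sumCongr a b = _ at hab
  rw [hab]
  simp only [← mul_assoc, crossLayer_mul_self, one_mul]
  simp only [mul_assoc, crossLayer_mul_self, mul_one]

end crossLayer

def IsBitLayer {m : ℕ} (b : ℕ) (τ : Perm (Fin m)) : Prop :=
  ∀ x, (τ x : ℕ) = x ∨ (τ x : ℕ) = x ^^^ 2 ^ b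

def finTwoPowSumEquiv (n : ℕ) : Fin (2 ^ n) ⊕ Fin (2 ^ n) ≃ Fin (2 ^ (n + 1)) :=
  finSumFinEquiv.trans (finCongr (Nat.two_pow_succ n).symm)

@[simp]
theorem val_finTwoPowSumEquiv_inl {n : ℕ} (y : Fin (2 ^ n)) :
    (finTwoPowSumEquiv n (.inl y) : ℕ) = y := rfl

@[simp]
theorem val_finTwoPowSumEquiv_inr {n : ℕ} (y : Fin (2 ^ n)) :
    (finTwoPowSumEquiv n (.inr y) : ℕ) = 2 ^ n + y := rfl

theorem isBitLayer_permCongr_crossLayer {n : ℕ} (s : Fin (2 ^ n) → Bool) :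
    IsBitLayer n ((finTwoPowSumEquiv n).permCongrHom (crossLayer s)) := by
  intro x
  obtain ⟨z, rfl⟩ := (finTwoPowSumEquiv n).surjective x
  rcases z with y | y <;> cases h : s y <;>
    simp [permCongrHom, crossLayer_apply_inl, crossLayer_apply_inr, h,
      Nat.xor_two_pow_of_lt y.isLt, Nat.two_pow_add_xor_two_pow y.isLt]

theorem IsBitLayer.permCongr_sumCongr {n k : ℕ} (hk : k < n) {a b : Perm (Fin (2 ^ n))}
    (ha : IsBitLayer k a) (hb : IsBitLayer k b) :
    IsBitLayer k ((finTwoPowSumEquiv n).permCongrHom (Perm.sumCongr a b)) := by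
  intro x
  obtain ⟨z, rfl⟩ := (finTwoPowSumEquiv n).surjective x
  have hk' : 2 ^ k < 2 ^ n := Nat.pow_lt_pow_right Nat.one_lt_two hk
  rcases z with y | y
  · simpa [permCongrHom] using ha y
  · simpa [permCongrHom, Nat.two_pow_add_xor_of_lt y.isLt hk'] using hb y

def benesBits (n : ℕ) : List ℕ :=
  (List.range n).reverse ++ List.range n

theorem benesBits_succ (n : ℕ) : benesBits (n + 1) = n :: benesBits n ++ [n] := by
  simp [benesBits, List.range_succ]

theorem length_benesBits (n : ℕ) : (benesBits n).length = 2 * n := by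
  simp [benesBits, two_mul]

theorem getElem_benesBits {n j : ℕ} (hj : j < (benesBits n).length) :
    (benesBits n)[j] = if j < n then n - 1 - j else j - n := by
  simp [benesBits, List.getElem_append]

theorem lt_of_mem_benesBits {n k : ℕ} (hk : k ∈ benesBits n) : k < n := by
  simpa [benesBits] using hk

theorem exists_forall₂_isBitLayer_and_eq_prod (n : ℕ) (σ : Perm (Fin (2 ^ n))) :
    ∃ ts : List (Perm (Fin (2 ^ n))),
      List.Forall₂ IsBitLayer (benesBits n) ts ∧ σ = ts.reverse.prod := by
  induction n with
  | zero => exact ⟨[], .nil, Subsingleton.elim (α := Perm (Fin 1)) _ _⟩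
  | succ n ih =>
    let Φ := (finTwoPowSumEquiv n).permCongrHom
    obtain ⟨s, t, a, b, hσ⟩ := exists_eq_crossLayer_mul_sumCongr_mul_crossLayer (Φ.symm σ)
    obtain ⟨as, has, rfl⟩ := ih a
    obtain ⟨bs, hbs, rfl⟩ := ih b
    have hlen : as.length = bs.length := has.length_eq.symm.trans hbs.length_eq
    refine ⟨Φ (crossLayer s) :: List.zipWith (fun a b => Φ (Perm.sumCongr a b)) as bs ++
      [Φ (crossLayer t)], ?_, ?_⟩
    · rw [benesBits_succ]
      refine .cons (isBitLayer_permCongr_crossLayer s) (List.rel_append ?_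
        (.cons (isBitLayer_permCongr_crossLayer t) .nil))
      exact List.forall₂_zipWith has hbs fun k hk _ _ =>
        IsBitLayer.permCongr_sumCongr (lt_of_mem_benesBits hk)
    · have hmid : (List.zipWith (fun a b => Φ (Perm.sumCongr a b)) as.reverse bs.reverse).prod =
          Φ (Perm.sumCongr as.reverse.prod bs.reverse.prod) :=
        List.prod_zipWith_monoidHom (Φ.toMonoidHom.comp (Perm.sumCongrHom _ _))
          (by simpa using hlen)
      calc σ = Φ (Φ.symm σ) := (Φ.apply_symm_apply σ).symm
        _ = Φ (crossLayer t) * Φ (Perm.sumCongr as.reverse.prod bs.reverse.prod) *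
            Φ (crossLayer s) := by rw [hσ, map_mul, map_mul]
        _ = _ := by
          simp only [List.reverse_append, List.reverse_cons, List.reverse_zipWith hlen,
            List.prod_append, List.prod_cons, List.reverse_nil, List.nil_append, List.prod_nil,
            mul_one, hmid, mul_assoc]

end Benes

theorem benes_routing_BBstar_general (n : ℕ) (σ : Equiv.Perm (Fin (2 ^ n))) :
    ∃ τ : Fin (2 * n) → Equiv.Perm (Fin (2 ^ n)),
      σ = ((List.finRange (2 * n)).reverse.map τ).prod ∧
      ∀ (j : Fin (2 * n)) (x : Fin (2 ^ n)),
        (τ j x : ℕ) = (x : ℕ) ∨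
        (τ j x : ℕ) = (x : ℕ) ^^^
          2 ^ (if (j : ℕ) < n then n - 1 - (j : ℕ) else (j : ℕ) - n) := by
  obtain ⟨ts, hts, rfl⟩ := Benes.exists_forall₂_isBitLayer_and_eq_prod n σ
  have hlen : ts.length = 2 * n := hts.length_eq.symm.trans (Benes.length_benesBits n)
  refine ⟨fun j => ts[j.1], ?_, fun j => ?_⟩
  · have hts : (List.finRange (2 * n)).map (fun j => ts[j.1]) = ts :=
      List.ext_getElem (by simp [hlen]) (by simp)
    rw [List.map_reverse, hts]
  · have := hts.get (i := j) (by simp [Benes.length_benesBits]) (by simp [hlen])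
    simp only [List.get_eq_getElem, Benes.getElem_benesBits] at this
    exact this

/-- **Routing permutations through the Kaleidoscope architecture `BB*`**
(Beneš-type routing).  Every permutation `σ` of `Fin (2^n)` (with `n ≥ 1`) factors as
`σ = τ_{2n} ∘ ⋯ ∘ τ_1`, where the `j`-th factor moves every index `x` within
`{x, x XOR 2^{b_j}}` and the bit sequence is
`(b_1, …, b_{2n}) = (n-1, n-2, …, 1, 0, 0, 1, …, n-2, n-1)`.  Each factor `τ_j` is a
parallel layer of two-mode permutation gates along bit `b_j`, so every `2^n × 2^n`
permutation is implementable in the architecture `BB*`. -/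
theorem benes_routing_BBstar (n : ℕ) (hn : 1 ≤ n) (σ : Equiv.Perm (Fin (2 ^ n))) :
    ∃ τ : Fin (2 * n) → Equiv.Perm (Fin (2 ^ n)),
      σ = ((List.finRange (2 * n)).reverse.map τ).prod ∧
      ∀ (j : Fin (2 * n)) (x : Fin (2 ^ n)),
        (τ j x : ℕ) = (x : ℕ) ∨
        (τ j x : ℕ) = (x : ℕ) ^^^
          2 ^ (if (j : ℕ) < n then n - 1 - (j : ℕ) else (j : ℕ) - n) :=
  benes_routing_BBstar_general n σ
end

section
/- Embedding a one-dimensional grid circuit into the butterfly architecture (Lemma 10 of the paper): let n ≥ 1 and M = 2^n. For each edge index i ∈ {0,…,2^n−2} (connecting modes i and i+1), let U_i be an arbitrary 2×2 unitary, and define the level ℓ(i) := ν₂(i+1) + 1 ∈ {1,…,n}, where ν₂ is the 2-adic valuation. For each L ∈ {1,…,n} let G_L be the M×M matrix that acts as U_i on the two modes {i, i+1} for every edge i with ℓ(i) = L (these edges are pairwise disjoint) and as the identity elsewhere, and set C := G_n·G_{n−1}⋯G_1. Then there exist a permutation σ of Fin(2^n) and unitary M×M matrices W_1, …, W_n, with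 W_L(x,y) = 0 whenever y ≠ x and y ≠ x XOR 2^{L−1}, such that C = P_σ · (W_n·W_{n−1}⋯W_1) · P_σᵀ, where P_σ is the permutation matrix of σ. -/
open Matrix

/-- The lower endpoint `i` of the grid edge `(i, i+1)`, viewed inside `Fin (2^n)`. -/
def edgeLo (n : ℕ) (i : Fin (2 ^ n - 1)) : Fin (2 ^ n) :=
  ⟨(i : ℕ), by have := i.isLt; omega⟩

/-- The upper endpoint `i+1` of the grid edge `(i, i+1)`, viewed inside `Fin (2^n)`. -/
def edgeHi (n : ℕ) (i : Fin (2 ^ n - 1)) : Fin (2 ^ n) :=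
  ⟨(i : ℕ) + 1, by have := i.isLt; omega⟩

/-! The Gray code `g k = k XOR ⌊k/2⌋` is a bijection of `{0, …, 2^n - 1}` with
`g (i + 1) = g i XOR 2^ν₂(i+1)`. Relabelling the modes by `g` therefore sends every grid edge
`(i, i+1)` of level `L + 1` to a butterfly pair `{x, x XOR 2^L}`, so each grid layer `G_L`,
which acts by disjoint `2 × 2` unitary blocks on these edges, becomes a unitary butterfly layer
`W_L`; conjugating the whole product by the relabelling gives `C = P_σ (W_n ⋯ W_1) P_σᵀ`. -/

def grayCode (k : ℕ) : ℕ := k ^^^ k / 2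

theorem grayCode_div_two (k : ℕ) : grayCode (k / 2) = grayCode k / 2 := by
  simp [grayCode, Nat.xor_div_two, Nat.div_div_eq_div_mul]

theorem xor_grayCode_self (k : ℕ) : grayCode k ^^^ k / 2 = k := by
  rw [grayCode, Nat.xor_assoc, Nat.xor_self, Nat.xor_zero]

theorem grayCode_injective : Function.Injective grayCode := by
  intro a b h
  induction a using Nat.strong_induction_on generalizing b with
  | _ a ih =>
    have hhalf : a / 2 = b / 2 := by
      rcases Nat.eq_zero_or_pos a with rfl | ha
      · have hb := xor_grayCode_self b
        rw [← h, show grayCode 0 = 0 from rfl, Nat.zero_xor] at hb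
        omega
      · exact ih (a / 2) (by omega) (by rw [grayCode_div_two, grayCode_div_two, h])
    rw [← xor_grayCode_self a, ← xor_grayCode_self b, h, hhalf]

theorem grayCode_lt_two_pow {k n : ℕ} (hk : k < 2 ^ n) : grayCode k < 2 ^ n :=
  Nat.xor_lt_two_pow hk (lt_of_le_of_lt (Nat.div_le_self _ _) hk)

theorem grayCode_succ (k : ℕ) :
    grayCode (k + 1) = grayCode k ^^^ 2 ^ padicValNat 2 (k + 1) := by
  obtain ⟨v, m, hm, hk⟩ := Nat.exists_eq_two_pow_mul_odd (by omega : k + 1 ≠ 0)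
  have hv : padicValNat 2 (k + 1) = v := by
    rw [hk, padicValNat.mul (by positivity) hm.pos.ne', padicValNat.prime_pow,
      padicValNat.eq_zero_of_not_dvd hm.not_two_dvd_nat, add_zero]
  obtain ⟨m, rfl⟩ := hm
  have hpos : 0 < 2 ^ v := by positivity
  have hsucc : k + 1 = 2 ^ (v + 1) * m + 2 ^ v := by rw [hk]; ring
  have hself : k = 2 ^ (v + 1) * m + (2 ^ v - 1) := by omega
  have hlt : 2 ^ v < 2 ^ (v + 1) := Nat.pow_lt_pow_right (by norm_num) (by omega)
  rw [hv]
  -- `k` and `k + 1` differ exactly in the bits `0, …, v`, so their Gray codes only in bit `v`.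
  apply Nat.eq_of_testBit_eq
  intro j
  simp only [grayCode, Nat.testBit_xor, Nat.testBit_div_two]
  rw [hsucc, hself, Nat.testBit_two_pow_mul_add _ hlt, Nat.testBit_two_pow_mul_add _ hlt,
    Nat.testBit_two_pow_mul_add _ (by omega), Nat.testBit_two_pow_mul_add _ (by omega)]
  rcases lt_trichotomy j v with h | rfl | h
  · rcases (show j + 1 < v ∨ j + 1 = v by omega) with h' | rfl
    · simp [h, h', h.le, h'.le, show v ≠ j by omega, show v ≠ j + 1 by omega]
    · simp
  · simp
  · simp [show ¬ j < v + 1 by omega, show ¬ j + 1 < v + 1 by omega, show v ≠ j by omega]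

theorem padicValNat_two_succ_ne {a : ℕ} (ha : a ≠ 0) :
    padicValNat 2 (a + 1) ≠ padicValNat 2 a := by
  rcases Nat.even_or_odd a with h | h
  · have := one_le_padicValNat_of_dvd ha (even_iff_two_dvd.mp h)
    rw [padicValNat.eq_zero_of_not_dvd h.add_one.not_two_dvd_nat]
    omega
  · have := one_le_padicValNat_of_dvd (by omega) (even_iff_two_dvd.mp h.add_one)
    rw [padicValNat.eq_zero_of_not_dvd h.not_two_dvd_nat]
    omega

structure IsBlockLayer {ι κ E R : Type*} [DecidableEq ι] [Zero R] [One R] (S : Set E)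
    (block : E → κ → ι) (U : E → Matrix κ κ R) (A : Matrix ι ι R) : Prop where
  block_injective : ∀ e ∈ S, Function.Injective (block e)
  eq_of_block_eq : ∀ e ∈ S, ∀ e' ∈ S, ∀ p q, block e p = block e' q → e = e'
  apply_block : ∀ e ∈ S, ∀ p q, A (block e p) (block e q) = U e p q
  apply_block_left : ∀ e ∈ S, ∀ p y, (∀ q, y ≠ block e q) → A (block e p) y = 0
  apply_of_forall_ne : ∀ x y, (∀ e ∈ S, ∀ p, x ≠ block e p) → A x y = if y = x then 1 else 0

namespace IsBlockLayer

variable {ι κ E R : Type*} [DecidableEq ι] {S : Set E} {block : E → κ → ι}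
  {U : E → Matrix κ κ R} {A : Matrix ι ι R}

theorem apply_eq_zero [Zero R] [One R] (hA : IsBlockLayer S block U A) {x y : ι} (hyx : y ≠ x)
    (hxy : ¬ ∃ e ∈ S, ∃ p q, x = block e p ∧ y = block e q) : A x y = 0 := by
  by_cases hx : ∃ e ∈ S, ∃ p, x = block e p
  · obtain ⟨e, he, p, rfl⟩ := hx
    exact hA.apply_block_left e he p y fun q hq => hxy ⟨e, he, p, q, rfl, hq⟩
  · push Not at hx
    rw [hA.apply_of_forall_ne x y hx, if_neg hyx]

variable [Fintype ι] [Fintype κ] [DecidableEq κ] [CommRing R] [StarRing R]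

theorem mem_unitaryGroup (hA : IsBlockLayer S block U A)
    (hU : ∀ e ∈ S, U e ∈ unitaryGroup κ R) : A ∈ unitaryGroup ι R := by
  rw [mem_unitaryGroup_iff]
  ext x y
  rw [mul_apply, one_apply]
  simp only [star_apply]
  by_cases hx : ∃ e ∈ S, ∃ p, x = block e p
  · obtain ⟨e, he, p, rfl⟩ := hx
    have hrow : ∑ k, A (block e p) k * star (A y k) = ∑ q, U e p q * star (A y (block e q)) :=
      (Fintype.sum_of_injective _ (hA.block_injective e he) _ _
        (fun k hk => by
          rw [hA.apply_block_left e he p k fun q hq => hk ⟨q, hq.symm⟩, zero_mul])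
        (fun q => by rw [hA.apply_block e he])).symm
    rw [hrow]
    by_cases hy : ∃ q, y = block e q
    · obtain ⟨q, rfl⟩ := hy
      have hUe := congr_fun₂ (mem_unitaryGroup_iff.mp (hU e he)) p q
      rw [mul_apply, one_apply] at hUe
      simp only [star_apply] at hUe
      simp only [hA.apply_block e he, hUe, (hA.block_injective e he).eq_iff]
    · rw [if_neg fun hxy => hy ⟨p, hxy.symm⟩]
      refine Finset.sum_eq_zero fun q _ => ?_
      rw [hA.apply_eq_zero (fun h => hy ⟨q, h.symm⟩), star_zero, mul_zero]
      rintro ⟨e', he', p', q', rfl, hq'⟩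
      obtain rfl := hA.eq_of_block_eq e he e' he' q q' hq'
      exact hy ⟨p', rfl⟩
  · push Not at hx
    simp only [hA.apply_of_forall_ne x _ hx, ite_mul, one_mul, zero_mul, Finset.sum_ite_eq',
      Finset.mem_univ, if_true]
    by_cases hxy : x = y
    · subst hxy
      rw [hA.apply_of_forall_ne x x hx, if_pos rfl, star_one]
    · rw [hA.apply_eq_zero hxy, star_zero, if_neg hxy]
      rintro ⟨e, he, p, q, -, rfl⟩
      exact hx e he q rfl

end IsBlockLayer

theorem reindex_mem_unitaryGroup {m n R : Type*} [Fintype m] [Fintype n] [DecidableEq m]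
    [DecidableEq n] [CommRing R] [StarRing R] (e : m ≃ n) {A : Matrix m m R}
    (hA : A ∈ unitaryGroup m R) : reindex e e A ∈ unitaryGroup n R := by
  rw [mem_unitaryGroup_iff] at hA ⊢
  rw [star_eq_conjTranspose, conjTranspose_reindex, ← star_eq_conjTranspose,
    ← coe_reindexRingEquiv, ← map_mul, hA, map_one]

theorem permMatrix_mul_reindex_mul_transpose {n R : Type*} [Fintype n] [DecidableEq n]
    [NonAssocSemiring R] (σ : Equiv.Perm n) (A : Matrix n n R) :
    σ.permMatrix R * reindex σ σ A * (σ.permMatrix R)ᵀ = A := by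
  rw [transpose_permMatrix, Equiv.Perm.permMatrix, Equiv.Perm.permMatrix,
    PEquiv.toMatrix_toPEquiv_mul, PEquiv.mul_toMatrix_toPEquiv]
  ext x y
  simp [Equiv.Perm.inv_def]

theorem reindex_list_prod {ι m n R : Type*} [Fintype m] [Fintype n] [DecidableEq m]
    [DecidableEq n] [Semiring R] (e : m ≃ n) (l : List ι) (f : ι → Matrix m m R) :
    (l.map fun i => reindex e e (f i)).prod = reindex e e (l.map f).prod := by
  rw [← coe_reindexRingEquiv, map_list_prod, List.map_map]
  rfl

def gridLevel (n L : ℕ) : Set (Fin (2 ^ n - 1)) := {i | padicValNat 2 ((i : ℕ) + 1) = L}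

def gridEdge (n : ℕ) (i : Fin (2 ^ n - 1)) : Fin 2 → Fin (2 ^ n) := ![edgeLo n i, edgeHi n i]

noncomputable def grayPerm (n : ℕ) : Equiv.Perm (Fin (2 ^ n)) :=
  Equiv.ofBijective (fun k => ⟨grayCode k, grayCode_lt_two_pow k.isLt⟩)
    (Finite.injective_iff_bijective.mp fun _ _ h =>
      Fin.ext (grayCode_injective (congrArg Fin.val h)))

theorem grayPerm_edgeHi (n : ℕ) (i : Fin (2 ^ n - 1)) :
    (grayPerm n (edgeHi n i) : ℕ) = grayPerm n (edgeLo n i) ^^^ 2 ^ padicValNat 2 (i + 1) :=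
  grayCode_succ i

theorem isBlockLayer_grid {R : Type*} [Zero R] [One R] (n L : ℕ)
    (U : Fin (2 ^ n - 1) → Matrix (Fin 2) (Fin 2) R) (A : Matrix (Fin (2 ^ n)) (Fin (2 ^ n)) R)
    (hgate : ∀ i : Fin (2 ^ n - 1), padicValNat 2 ((i : ℕ) + 1) + 1 = L + 1 →
      A (edgeLo n i) (edgeLo n i) = U i 0 0 ∧ A (edgeLo n i) (edgeHi n i) = U i 0 1 ∧
      A (edgeHi n i) (edgeLo n i) = U i 1 0 ∧ A (edgeHi n i) (edgeHi n i) = U i 1 1)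
    (hoff : ∀ (i : Fin (2 ^ n - 1)) (y : Fin (2 ^ n)),
      padicValNat 2 ((i : ℕ) + 1) + 1 = L + 1 → y ≠ edgeLo n i → y ≠ edgeHi n i →
      A (edgeLo n i) y = 0 ∧ A (edgeHi n i) y = 0)
    (hid : ∀ x y : Fin (2 ^ n),
      (¬ ∃ i : Fin (2 ^ n - 1), padicValNat 2 ((i : ℕ) + 1) + 1 = L + 1 ∧
        (x = edgeLo n i ∨ x = edgeHi n i)) →
      A x y = if y = x then 1 else 0) :
    IsBlockLayer (gridLevel n L) (gridEdge n) U A where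
  block_injective i _ p q h := by
    fin_cases p <;> fin_cases q <;> simp [gridEdge, edgeLo, edgeHi, Fin.ext_iff] at h ⊢
  eq_of_block_eq i (hi : padicValNat 2 _ = L) i' (hi' : padicValNat 2 _ = L) p q h := by
    have hne := padicValNat_two_succ_ne (a := (i : ℕ) + 1) (by omega)
    have hne' := padicValNat_two_succ_ne (a := (i' : ℕ) + 1) (by omega)
    fin_cases p <;> fin_cases q <;> simp [gridEdge, edgeLo, edgeHi, Fin.ext_iff] at h ⊢ <;>
      grind
  apply_block i hi p q := by
    obtain ⟨h00, h01, h10, h11⟩ := hgate i (congrArg (· + 1) hi)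
    fin_cases p <;> fin_cases q <;> assumption
  apply_block_left i hi p y hy := by
    obtain ⟨hlo, hhi⟩ := hoff i y (congrArg (· + 1) hi) (hy 0) (hy 1)
    fin_cases p <;> assumption
  apply_of_forall_ne x y hx := hid x y fun ⟨i, hi, hxi⟩ =>
    hxi.elim (hx i (Nat.add_right_cancel hi) 0) (hx i (Nat.add_right_cancel hi) 1)

theorem IsBlockLayer.reindex_grayPerm_apply_eq_zero {R : Type*} [Zero R] [One R] {n L : ℕ}
    {U : Fin (2 ^ n - 1) → Matrix (Fin 2) (Fin 2) R} {A : Matrix (Fin (2 ^ n)) (Fin (2 ^ n)) R}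
    (hA : IsBlockLayer (gridLevel n L) (gridEdge n) U A)
    {x y : Fin (2 ^ n)} (hyx : y ≠ x) (hxor : (y : ℕ) ≠ x ^^^ 2 ^ L) :
    reindex (grayPerm n) (grayPerm n) A x y = 0 := by
  refine hA.apply_eq_zero ((grayPerm n).symm.injective.ne hyx) ?_
  rintro ⟨i, hi, p, q, hp, hq⟩
  rw [Equiv.symm_apply_eq] at hp hq
  have hedge := grayPerm_edgeHi n i
  rw [show padicValNat 2 ((i : ℕ) + 1) = L from hi] at hedge
  fin_cases p <;> fin_cases q <;> simp only [gridEdge, Fin.zero_eta, Fin.mk_one,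
    Matrix.cons_val_zero, Matrix.cons_val_one] at hp hq <;> subst hp hq
  · exact hyx rfl
  · exact hxor hedge
  · exact hxor (by rw [hedge, Nat.xor_assoc, Nat.xor_self, Nat.xor_zero])
  · exact hyx rfl

theorem grid_embeds_in_butterfly_general (n : ℕ)
    (U : Fin (2 ^ n - 1) → Matrix (Fin 2) (Fin 2) ℂ)
    (hU : ∀ i, U i ∈ Matrix.unitaryGroup (Fin 2) ℂ)
    (G : Fin n → Matrix (Fin (2 ^ n)) (Fin (2 ^ n)) ℂ)
    (hGgate : ∀ (L : Fin n) (i : Fin (2 ^ n - 1)),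
      padicValNat 2 ((i : ℕ) + 1) + 1 = (L : ℕ) + 1 →
      G L (edgeLo n i) (edgeLo n i) = U i 0 0 ∧
      G L (edgeLo n i) (edgeHi n i) = U i 0 1 ∧
      G L (edgeHi n i) (edgeLo n i) = U i 1 0 ∧
      G L (edgeHi n i) (edgeHi n i) = U i 1 1)
    (hGoff : ∀ (L : Fin n) (i : Fin (2 ^ n - 1)) (y : Fin (2 ^ n)),
      padicValNat 2 ((i : ℕ) + 1) + 1 = (L : ℕ) + 1 →
      y ≠ edgeLo n i → y ≠ edgeHi n i →
      G L (edgeLo n i) y = 0 ∧ G L (edgeHi n i) y = 0)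
    (hGid : ∀ (L : Fin n) (x y : Fin (2 ^ n)),
      (¬ ∃ i : Fin (2 ^ n - 1), padicValNat 2 ((i : ℕ) + 1) + 1 = (L : ℕ) + 1 ∧
        (x = edgeLo n i ∨ x = edgeHi n i)) →
      G L x y = if y = x then 1 else 0) :
    ∃ (σ : Equiv.Perm (Fin (2 ^ n))) (W : Fin n → Matrix (Fin (2 ^ n)) (Fin (2 ^ n)) ℂ),
      (∀ L, W L ∈ Matrix.unitaryGroup (Fin (2 ^ n)) ℂ) ∧
      (∀ (L : Fin n) (x y : Fin (2 ^ n)),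
        y ≠ x → (y : ℕ) ≠ (x : ℕ) ^^^ 2 ^ (L : ℕ) → W L x y = 0) ∧
      ((List.finRange n).reverse.map G).prod =
        σ.permMatrix ℂ * ((List.finRange n).reverse.map W).prod * (σ.permMatrix ℂ)ᵀ := by
  have hlayer (L : Fin n) := isBlockLayer_grid n L U (G L) (hGgate L) (hGoff L) (hGid L)
  refine ⟨grayPerm n, fun L => reindex (grayPerm n) (grayPerm n) (G L),
    fun L => reindex_mem_unitaryGroup _ ((hlayer L).mem_unitaryGroup fun i _ => hU i),
    fun L x y => (hlayer L).reindex_grayPerm_apply_eq_zero, ?_⟩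
  rw [reindex_list_prod, permMatrix_mul_reindex_mul_transpose]

/-- **Embedding a one-dimensional grid circuit into the butterfly architecture**
(Lemma 10 of the paper).  Let `M = 2^n` and, for each edge `i` (connecting modes `i` and
`i+1`), let `U i` be a `2×2` unitary; the level of edge `i` is `ℓ(i) = ν₂(i+1) + 1`.
For each `L ∈ {1,…,n}` (here `L : Fin n` stands for level `L+1`), `G L` is the `M × M`
matrix acting as `U i` on the modes `{i, i+1}` of every edge `i` of level `L+1` and as
the identity elsewhere (the hypotheses `hGgate`, `hGoff`, `hGid` specify all its entries).
Then the grid circuit `C = G_n ⋯ G_1` can be written as `P_σ · (W_n ⋯ W_1) · P_σᵀ` for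
some permutation `σ` and unitary matrices `W_L` supported on the butterfly layer `L`,
i.e. `W L x y = 0` unless `y ∈ {x, x XOR 2^L}`. -/
theorem grid_embeds_in_butterfly (n : ℕ) (hn : 1 ≤ n)
    (U : Fin (2 ^ n - 1) → Matrix (Fin 2) (Fin 2) ℂ)
    (hU : ∀ i, U i ∈ Matrix.unitaryGroup (Fin 2) ℂ)
    (G : Fin n → Matrix (Fin (2 ^ n)) (Fin (2 ^ n)) ℂ)
    (hGgate : ∀ (L : Fin n) (i : Fin (2 ^ n - 1)),
      padicValNat 2 ((i : ℕ) + 1) + 1 = (L : ℕ) + 1 →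
      G L (edgeLo n i) (edgeLo n i) = U i 0 0 ∧
      G L (edgeLo n i) (edgeHi n i) = U i 0 1 ∧
      G L (edgeHi n i) (edgeLo n i) = U i 1 0 ∧
      G L (edgeHi n i) (edgeHi n i) = U i 1 1)
    (hGoff : ∀ (L : Fin n) (i : Fin (2 ^ n - 1)) (y : Fin (2 ^ n)),
      padicValNat 2 ((i : ℕ) + 1) + 1 = (L : ℕ) + 1 →
      y ≠ edgeLo n i → y ≠ edgeHi n i →
      G L (edgeLo n i) y = 0 ∧ G L (edgeHi n i) y = 0)
    (hGid : ∀ (L : Fin n) (x y : Fin (2 ^ n)),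
      (¬ ∃ i : Fin (2 ^ n - 1), padicValNat 2 ((i : ℕ) + 1) + 1 = (L : ℕ) + 1 ∧
        (x = edgeLo n i ∨ x = edgeHi n i)) →
      G L x y = if y = x then 1 else 0) :
    ∃ (σ : Equiv.Perm (Fin (2 ^ n))) (W : Fin n → Matrix (Fin (2 ^ n)) (Fin (2 ^ n)) ℂ),
      (∀ L, W L ∈ Matrix.unitaryGroup (Fin (2 ^ n)) ℂ) ∧
      (∀ (L : Fin n) (x y : Fin (2 ^ n)),
        y ≠ x → (y : ℕ) ≠ (x : ℕ) ^^^ 2 ^ (L : ℕ) → W L x y = 0) ∧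
      ((List.finRange n).reverse.map G).prod =
        σ.permMatrix ℂ * ((List.finRange n).reverse.map W).prod * (σ.permMatrix ℂ)ᵀ :=
  grid_embeds_in_butterfly_general n U hU G hGgate hGoff hGid
end
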